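/- Under the standing assumptions, suppose k > max over all pairs i, j ∈ {1,…,n} of max( (w_i + v_j − γ_{i,j})/λ* + (n − 1), (w_i − α_i + v_j − β_j)/λ* + 2(n − 1) ), where terms involving γ_{i,j} = −∞ are omitted from the maximum. Then Γ(k) is rank one; more precisely, Γ(k) equals the max-plus outer product of its first column and its first row: Γ(k)_{i,j} = Γ(k)_{i,1} + Γ(k)_{1,j} for all i, j ∈ {1,…,n}. (Note that this bound on k is computable without knowing Γ(k).) -/

import Mathlib

/-
Common framework for "A bound for the rank-one transient of inhomogeneous matrix
products in special case" (Kennedy-Cochran-Patrick, Sergeev, Berežný).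

We work over the max-plus semiring, modelled inside `EReal` (so `⊥ = -∞` is the
max-plus zero and ordinary addition is the max-plus multiplication).  Matrices are
functions `Fin m → Fin m → EReal`.  The distinguished node "1" of the paper is the
node `0 : Fin (n+2)` (so that `n + 2 ≥ 2` plays the role of the paper's `n ≥ 2`).

A walk is a nonempty list of nodes.  Walks on the trellis digraph of the product
`A 1 ⊗ ⋯ ⊗ A k` additionally record the level at which they start: the arc from the
`(l-1)`-st to the `l`-th node of a walk starting at level `s` has weight given by the
matrix `A (s + l)`.
-/

open scoped Classical

noncomputable section

namespace MaxPlusTransient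

variable {m : ℕ}

/-- Weight of a walk on the trellis digraph, starting at level `s`. -/
def tw (M : ℕ → Fin m → Fin m → EReal) : ℕ → List (Fin m) → EReal
  | _, [] => 0
  | _, [_] => 0
  | s, a :: b :: t => M (s + 1) a b + tw M (s + 1) (b :: t)

/-- Being a walk on the trellis digraph, starting at level `s` (all traversed arcs exist,
i.e. have weight `≠ -∞`); a walk is a nonempty list of nodes. -/
def twalk (M : ℕ → Fin m → Fin m → EReal) : ℕ → List (Fin m) → Prop
  | _, [] => False
  | _, [_] => True
  | s, a :: b :: t => M (s + 1) a b ≠ ⊥ ∧ twalk M (s + 1) (b :: t)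

/-- Weight of a walk on the digraph `D_A` of a single matrix `A`. -/
def wWeight (A : Fin m → Fin m → EReal) (W : List (Fin m)) : EReal :=
  tw (fun _ => A) 0 W

/-- Being a walk on the digraph `D_A` of a matrix `A`. -/
def isWalk (A : Fin m → Fin m → EReal) (W : List (Fin m)) : Prop :=
  twalk (fun _ => A) 0 W

/-- A path is a walk with no repeated nodes. -/
def isPath (A : Fin m → Fin m → EReal) (W : List (Fin m)) : Prop :=
  isWalk A W ∧ W.Nodup

/-- A cycle is a walk of length (number of arcs) at least one whose first and last
nodes coincide. -/
def isCycle (A : Fin m → Fin m → EReal) (W : List (Fin m)) : Prop :=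
  isWalk A W ∧ 2 ≤ W.length ∧ W.head? = W.getLast?

/-- A matrix is irreducible iff its digraph is strongly connected. -/
def irreducible (A : Fin m → Fin m → EReal) : Prop :=
  ∀ i j : Fin m, ∃ W, isWalk A W ∧ W.head? = some i ∧ W.getLast? = some j

/-- Geometric equivalence: the digraphs have the same arcs. -/
def geomEq (A B : Fin m → Fin m → EReal) : Prop :=
  ∀ i j, A i j = ⊥ ↔ B i j = ⊥

/-- Max-plus matrix product. -/
def mp (A B : Fin m → Fin m → EReal) : Fin m → Fin m → EReal :=
  fun i j => ⨆ s, A i s + B s j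

/-- `Gamma M k = M 1 ⊗ M 2 ⊗ ⋯ ⊗ M k` (max-plus product), with `Gamma M 0` the
max-plus identity matrix. -/
def Gamma (M : ℕ → Fin m → Fin m → EReal) : ℕ → Fin m → Fin m → EReal
  | 0 => fun i j => if i = j then 0 else ⊥
  | k + 1 => mp (Gamma M k) (M (k + 1))

/-- An initial walk from `i` to `one` on the trellis digraph of `M 1 ⊗ ⋯ ⊗ M k`:
it starts at node `i` at level `0`, ends at node `one` at some level `≤ k`, and the
only node of the walk equal to `one` is its final node. -/
def isInitialWalk (M : ℕ → Fin m → Fin m → EReal) (one : Fin m) (k : ℕ) (i : Fin m)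
    (W : List (Fin m)) : Prop :=
  twalk M 0 W ∧ W.length - 1 ≤ k ∧ W.head? = some i ∧ W.getLast? = some one ∧
    ∀ v ∈ W.dropLast, v ≠ one

/-- A final walk from `one` to `j` on the trellis digraph of `M 1 ⊗ ⋯ ⊗ M k`:
it starts at node `one` at some level `s`, ends at node `j` at level `k`, and the
only node of the walk equal to `one` is its first node. -/
def isFinalWalk (M : ℕ → Fin m → Fin m → EReal) (one : Fin m) (k : ℕ) (j : Fin m) (s : ℕ)
    (W : List (Fin m)) : Prop :=
  twalk M s W ∧ s + (W.length - 1) = k ∧ W.head? = some one ∧ W.getLast? = some j ∧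
    ∀ v ∈ W.tail, v ≠ one

/-- A full walk from `i` to `j` on the trellis digraph of `M 1 ⊗ ⋯ ⊗ M k`: it goes
from node `i` at level `0` to node `j` at level `k`. -/
def isFullWalk (M : ℕ → Fin m → Fin m → EReal) (k : ℕ) (i j : Fin m)
    (W : List (Fin m)) : Prop :=
  twalk M 0 W ∧ W.length = k + 1 ∧ W.head? = some i ∧ W.getLast? = some j

/-- `w_i*`: maximal weight of an initial walk from `i` to `one`. -/
def wStar (M : ℕ → Fin m → Fin m → EReal) (one : Fin m) (k : ℕ) (i : Fin m) : EReal :=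
  sSup {x : EReal | ∃ W, isInitialWalk M one k i W ∧ x = tw M 0 W}

/-- `v_j*`: maximal weight of a final walk from `one` to `j`. -/
def vStar (M : ℕ → Fin m → Fin m → EReal) (one : Fin m) (k : ℕ) (j : Fin m) : EReal :=
  sSup {x : EReal | ∃ s W, isFinalWalk M one k j s W ∧ x = tw M s W}

/-- `α_i`: maximal weight of a path on `D_A` from `i` to `one`. -/
def alphaE (A : Fin m → Fin m → EReal) (one : Fin m) (i : Fin m) : EReal :=
  sSup {x : EReal | ∃ W, isPath A W ∧ W.head? = some i ∧ W.getLast? = some one ∧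
    x = wWeight A W}

/-- `β_j`: maximal weight of a path on `D_A` from `one` to `j`. -/
def betaE (A : Fin m → Fin m → EReal) (one : Fin m) (j : Fin m) : EReal :=
  sSup {x : EReal | ∃ W, isPath A W ∧ W.head? = some one ∧ W.getLast? = some j ∧
    x = wWeight A W}

/-- `γ_{i,j}`: maximal weight of a path on `D_A` from `i` to `j` not passing through
`one` (`-∞` if no such path exists). -/
def gammaE (A : Fin m → Fin m → EReal) (one : Fin m) (i j : Fin m) : EReal :=
  sSup {x : EReal | ∃ W, isPath A W ∧ W.head? = some i ∧ W.getLast? = some j ∧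
    (∀ v ∈ W, v ≠ one) ∧ x = wWeight A W}

/-- The set of mean weights of cycles of `D_A` avoiding the node `one`. -/
def lamSet (A : Fin m → Fin m → EReal) (one : Fin m) : Set ℝ :=
  {x : ℝ | ∃ W, isCycle A W ∧ (∀ v ∈ W, v ≠ one) ∧
    ∃ r : ℝ, wWeight A W = (r : EReal) ∧ x = r / ((W.length : ℝ) - 1)}

/-- `λ*`: the supremum of the mean weights of cycles of `D_A` avoiding `one`. -/
def lamStar (A : Fin m → Fin m → EReal) (one : Fin m) : ℝ :=
  sSup (lamSet A one)

/-- `w_i`: maximal weight of a walk of length at most `k` from `i` to `one` on `D_A`. -/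
def wInf (A : Fin m → Fin m → EReal) (one : Fin m) (k : ℕ) (i : Fin m) : EReal :=
  sSup {x : EReal | ∃ W, isWalk A W ∧ W.length - 1 ≤ k ∧ W.head? = some i ∧
    W.getLast? = some one ∧ x = wWeight A W}

/-- `v_j`: maximal weight of a walk of length at most `k` from `one` to `j` on `D_A`. -/
def vInf (A : Fin m → Fin m → EReal) (one : Fin m) (k : ℕ) (j : Fin m) : EReal :=
  sSup {x : EReal | ∃ W, isWalk A W ∧ W.length - 1 ≤ k ∧ W.head? = some one ∧
    W.getLast? = some j ∧ x = wWeight A W}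

/-- The standing assumptions of the paper on the set `𝒳` and its entrywise boundaries
`Asup` (supremum) and `Ainf` (infimum):
matrices of `𝒳` have no `+∞` entries, `Asup`/`Ainf` are the entrywise sup/inf,
`Asup` has no `+∞` entries and `Ainf` has no `-∞` entries where matrices of `𝒳` are
finite; all matrices of `𝒳` and also `Ainf` are irreducible and pairwise geometrically
equivalent; every matrix of `𝒳` and also `Asup` has `(one, one)` entry `0` and all its
cycles other than (repetitions of) the loop at `one` have strictly negative (mean)
weight. -/
def Standing (𝒳 : Set (Fin m → Fin m → EReal)) (Asup Ainf : Fin m → Fin m → EReal)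
    (one : Fin m) : Prop :=
  𝒳.Nonempty ∧
  (∀ X ∈ 𝒳, ∀ i j, X i j ≠ ⊤) ∧
  (∀ i j, Asup i j = ⨆ X ∈ 𝒳, X i j) ∧
  (∀ i j, Ainf i j = ⨅ X ∈ 𝒳, X i j) ∧
  (∀ i j, Asup i j ≠ ⊤) ∧
  (∀ X ∈ 𝒳, ∀ i j, X i j ≠ ⊥ → Ainf i j ≠ ⊥) ∧
  (∀ X ∈ 𝒳, irreducible X) ∧
  irreducible Ainf ∧
  (∀ X ∈ 𝒳, geomEq X Ainf) ∧
  (∀ X ∈ 𝒳, X one one = 0) ∧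
  (∀ X ∈ 𝒳, ∀ W, isCycle X W → (∃ v ∈ W, v ≠ one) → wWeight X W < 0) ∧
  Asup one one = 0 ∧
  (∀ W, isCycle Asup W → (∃ v ∈ W, v ≠ one) → wWeight Asup W < 0)

end MaxPlusTransient

namespace MaxPlusTransient

variable {m : ℕ}

/-! ### Basic lemmas about `tw` and `twalk` -/

lemma tw_cons₂ (M : ℕ → Fin m → Fin m → EReal) (s : ℕ) (a b : Fin m) (t : List (Fin m)) :
    tw M s (a :: b :: t) = M (s + 1) a b + tw M (s + 1) (b :: t) := rfl

lemma tw_append_cons (M : ℕ → Fin m → Fin m → EReal) (x : Fin m) (V : List (Fin m)) :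
    ∀ (U : List (Fin m)) (s : ℕ),
      tw M s (U ++ x :: V) = tw M s (U ++ [x]) + tw M (s + U.length) (x :: V)
  | [], s => by simp [tw]
  | [a], s => by
      show tw M s (a :: x :: V) = tw M s [a, x] + tw M (s + 1) (x :: V)
      rw [tw_cons₂, tw_cons₂, show tw M (s+1) [x] = 0 from rfl, add_zero]
  | a :: b :: U, s => by
      have ih := tw_append_cons M x V (b :: U) (s + 1)
      have hlen : s + 1 + (b :: U).length = s + (a :: b :: U).length := by
        simp only [List.length_cons]; omega
      simp only [List.cons_append] at *
      rw [tw_cons₂, tw_cons₂, ih, hlen, ← add_assoc]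

lemma twalk_append_cons (M : ℕ → Fin m → Fin m → EReal) (x : Fin m) (V : List (Fin m)) :
    ∀ (U : List (Fin m)) (s : ℕ),
      twalk M s (U ++ x :: V) ↔ twalk M s (U ++ [x]) ∧ twalk M (s + U.length) (x :: V)
  | [], s => by simp [twalk]
  | [a], s => by
      simp only [List.cons_append, List.nil_append, twalk, List.length_cons, List.length_nil]
      constructor
      · rintro ⟨h1, h2⟩; exact ⟨⟨h1, trivial⟩, h2⟩
      · rintro ⟨⟨h1, _⟩, h2⟩; exact ⟨h1, h2⟩
  | a :: b :: U, s => by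
      have ih := twalk_append_cons M x V (b :: U) (s + 1)
      have hlen : s + 1 + (b :: U).length = s + (a :: b :: U).length := by
        simp only [List.length_cons]; omega
      simp only [List.cons_append] at *
      show (M (s+1) a b ≠ ⊥ ∧ twalk M (s+1) _) ↔ (M (s+1) a b ≠ ⊥ ∧ twalk M (s+1) _) ∧ _
      rw [ih, hlen, and_assoc]

lemma tw_mono {M M' : ℕ → Fin m → Fin m → EReal} :
    ∀ (W : List (Fin m)) (s : ℕ),
      (∀ l a b, s + 1 ≤ l → l + 1 ≤ s + W.length → M l a b ≤ M' l a b) →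
      tw M s W ≤ tw M' s W
  | [], s, _ => le_refl _
  | [a], s, _ => le_refl _
  | a :: b :: t, s, h => by
      rw [tw_cons₂, tw_cons₂]
      refine add_le_add (h (s+1) a b le_rfl (by simp only [List.length_cons]; omega)) ?_
      exact tw_mono (b :: t) (s+1) (fun l a' b' h1 h2 => h l a' b' (by omega)
        (by simp only [List.length_cons] at h2 ⊢; omega))

lemma twalk_mono {M M' : ℕ → Fin m → Fin m → EReal} :
    ∀ (W : List (Fin m)) (s : ℕ),
      (∀ l a b, s + 1 ≤ l → l + 1 ≤ s + W.length → M l a b ≠ ⊥ → M' l a b ≠ ⊥) →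
      twalk M s W → twalk M' s W
  | [], s, _, h => h
  | [a], s, _, _ => trivial
  | a :: b :: t, s, h, hw => by
      obtain ⟨h1, h2⟩ := hw
      exact ⟨h (s+1) a b le_rfl (by simp only [List.length_cons]; omega) h1,
        twalk_mono (b :: t) (s+1) (fun l a' b' ha hb => h l a' b' (by omega)
          (by simp only [List.length_cons] at hb ⊢; omega)) h2⟩

lemma tw_const (B : Fin m → Fin m → EReal) :
    ∀ (W : List (Fin m)) (s s' : ℕ), tw (fun _ => B) s W = tw (fun _ => B) s' W
  | [], _, _ => rfl
  | [a], _, _ => rfl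
  | a :: b :: t, s, s' => by
      rw [tw_cons₂, tw_cons₂, tw_const B (b :: t) (s+1) (s'+1)]

lemma twalk_const (B : Fin m → Fin m → EReal) :
    ∀ (W : List (Fin m)) (s s' : ℕ), twalk (fun _ => B) s W → twalk (fun _ => B) s' W
  | [], _, _, h => h
  | [a], _, _, _ => trivial
  | a :: b :: t, s, s', h => ⟨h.1, twalk_const B (b :: t) (s+1) (s'+1) h.2⟩

lemma add_ne_bot_left {x y : EReal} (h : x + y ≠ ⊥) : x ≠ ⊥ := by
  intro h'; rw [h'] at h; exact h (EReal.bot_add y)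

lemma add_ne_bot_right {x y : EReal} (h : x + y ≠ ⊥) : y ≠ ⊥ := by
  intro h'; rw [h'] at h; exact h (EReal.add_bot x)

lemma twalk_of_tw_ne_bot {M : ℕ → Fin m → Fin m → EReal} :
    ∀ (W : List (Fin m)) (s : ℕ), W ≠ [] → tw M s W ≠ ⊥ → twalk M s W
  | [], _, h, _ => absurd rfl h
  | [a], _, _, _ => trivial
  | a :: b :: t, s, _, h => by
      rw [tw_cons₂] at h
      exact ⟨add_ne_bot_left h, twalk_of_tw_ne_bot (b :: t) (s+1) (by simp) (add_ne_bot_right h)⟩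

lemma tw_real {M : ℕ → Fin m → Fin m → EReal} :
    ∀ (W : List (Fin m)) (s : ℕ), twalk M s W →
      (∀ l a b, s + 1 ≤ l → l + 1 ≤ s + W.length → M l a b ≠ ⊤) →
      ∃ r : ℝ, tw M s W = (r : EReal)
  | [], _, _, _ => ⟨0, rfl⟩
  | [a], _, _, _ => ⟨0, rfl⟩
  | a :: b :: t, s, hw, htop => by
      obtain ⟨h1, h2⟩ := hw
      obtain ⟨r2, hr2⟩ := tw_real (b :: t) (s+1) h2 (fun l a' b' ha hb => htop l a' b' (by omega)
        (by simp only [List.length_cons] at hb ⊢; omega))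
      have hr1 : ((M (s+1) a b).toReal : EReal) = M (s+1) a b :=
        EReal.coe_toReal (htop (s+1) a b le_rfl (by simp only [List.length_cons]; omega)) h1
      exact ⟨(M (s+1) a b).toReal + r2, by rw [tw_cons₂, hr2, EReal.coe_add, hr1]⟩

lemma tw_cons_replicate {M : ℕ → Fin m → Fin m → EReal} {x : Fin m} :
    ∀ (c s : ℕ), (∀ l, s + 1 ≤ l → l ≤ s + c → M l x x = 0) →
      tw M s (x :: List.replicate c x) = 0
  | 0, s, _ => rfl
  | c + 1, s, h => by
      rw [List.replicate_succ, tw_cons₂, h (s+1) le_rfl (by omega),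
        tw_cons_replicate c (s+1) (fun l h1 h2 => h l (by omega) (by omega)), add_zero]

lemma head?_append_cons (U : List (Fin m)) (x : Fin m) (V V' : List (Fin m)) :
    (U ++ x :: V).head? = (U ++ x :: V').head? := by
  cases U <;> rfl

lemma getLast?_append_cons (U : List (Fin m)) (x : Fin m) (V : List (Fin m)) :
    (U ++ x :: V).getLast? = (x :: V).getLast? := by
  rw [List.getLast?_append]
  obtain ⟨y, hy⟩ : ∃ y, (x :: V).getLast? = some y := by
    cases h : (x :: V).getLast? with
    | none => exact absurd h (by simp)
    | some y => exact ⟨y, rfl⟩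
  rw [hy]; rfl

lemma getLast?_cons_replicate_append (x : Fin m) :
    ∀ (c : ℕ) (V : List (Fin m)), (x :: (List.replicate c x ++ V)).getLast? = (x :: V).getLast?
  | 0, V => rfl
  | c + 1, V => by
      rw [List.replicate_succ, List.cons_append, List.getLast?_cons_cons]
      exact getLast?_cons_replicate_append x c V

lemma exists_first_split {a : Fin m} :
    ∀ {l : List (Fin m)}, a ∈ l → ∃ s t, l = s ++ a :: t ∧ a ∉ s := by
  intro l hl
  induction l with
  | nil => simp at hl
  | cons b l ih =>
      by_cases hab : a = b
      · subst hab; exact ⟨[], l, rfl, by simp⟩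
      · have : a ∈ l := by rcases List.mem_cons.mp hl with h | h; exact absurd h hab; exact h
        obtain ⟨s, t, h1, h2⟩ := ih this
        exact ⟨b :: s, t, by rw [h1]; rfl, by simp [hab, h2]⟩

lemma not_nodup_split {l : List (Fin m)} (h : ¬ l.Nodup) :
    ∃ (x : Fin m) (X Y Z : List (Fin m)), l = X ++ x :: Y ++ x :: Z := by
  induction l with
  | nil => exact absurd List.nodup_nil h
  | cons b l ih =>
      by_cases hb : b ∈ l
      · obtain ⟨Y, Z, h1, _⟩ := exists_first_split hb
        exact ⟨b, [], Y, Z, by rw [h1]; rfl⟩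
      · have : ¬ l.Nodup := fun hn => h (List.nodup_cons.mpr ⟨hb, hn⟩)
        obtain ⟨x, X, Y, Z, h1⟩ := ih this
        exact ⟨x, b :: X, Y, Z, by rw [h1]; rfl⟩

end MaxPlusTransient

namespace MaxPlusTransient

variable {m : ℕ}

/-! ### Lemmas about `wWeight` and `isWalk` -/

lemma wWeight_cons₂ (B : Fin m → Fin m → EReal) (a b : Fin m) (t : List (Fin m)) :
    wWeight B (a :: b :: t) = B a b + wWeight B (b :: t) := by
  show tw (fun _ => B) 0 (a :: b :: t) = _
  rw [tw_cons₂, wWeight, tw_const B (b :: t) 1 0]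

lemma wWeight_single (B : Fin m → Fin m → EReal) (a : Fin m) : wWeight B [a] = 0 := rfl

lemma isWalk_cons₂ (B : Fin m → Fin m → EReal) (a b : Fin m) (t : List (Fin m)) :
    isWalk B (a :: b :: t) ↔ B a b ≠ ⊥ ∧ isWalk B (b :: t) := by
  constructor
  · rintro ⟨h1, h2⟩; exact ⟨h1, twalk_const B (b :: t) 1 0 h2⟩
  · rintro ⟨h1, h2⟩; exact ⟨h1, twalk_const B (b :: t) 0 1 h2⟩

lemma isWalk_single (B : Fin m → Fin m → EReal) (a : Fin m) : isWalk B [a] := trivial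

lemma isWalk_ne_nil {B : Fin m → Fin m → EReal} {W : List (Fin m)} (h : isWalk B W) :
    W ≠ [] := fun hW => by rw [hW] at h; exact h

lemma wWeight_append_cons (B : Fin m → Fin m → EReal) (U : List (Fin m)) (x : Fin m)
    (V : List (Fin m)) :
    wWeight B (U ++ x :: V) = wWeight B (U ++ [x]) + wWeight B (x :: V) := by
  show tw (fun _ => B) 0 _ = _
  rw [tw_append_cons, wWeight, wWeight, tw_const B (x :: V) (0 + U.length) 0]

lemma isWalk_append_cons (B : Fin m → Fin m → EReal) (U : List (Fin m)) (x : Fin m)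
    (V : List (Fin m)) :
    isWalk B (U ++ x :: V) ↔ isWalk B (U ++ [x]) ∧ isWalk B (x :: V) := by
  rw [isWalk, isWalk, isWalk, twalk_append_cons]
  constructor
  · rintro ⟨h1, h2⟩; exact ⟨h1, twalk_const B (x :: V) (0 + U.length) 0 h2⟩
  · rintro ⟨h1, h2⟩; exact ⟨h1, twalk_const B (x :: V) 0 (0 + U.length) h2⟩

lemma walk_real {B : Fin m → Fin m → EReal} (htop : ∀ i j, B i j ≠ ⊤) {W : List (Fin m)}
    (hW : isWalk B W) : ∃ r : ℝ, wWeight B W = (r : EReal) :=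
  tw_real W 0 hW (fun l a b _ _ => htop a b)

lemma wWeight_all_eq {B : Fin m → Fin m → EReal} {z : Fin m} (hz : B z z = 0) :
    ∀ {W : List (Fin m)}, (∀ v ∈ W, v = z) → wWeight B W = 0
  | [], _ => rfl
  | [a], _ => rfl
  | a :: b :: t, h => by
      have ha : a = z := h a (by simp)
      have hb : b = z := h b (by simp)
      rw [wWeight_cons₂, wWeight_all_eq hz (fun v hv => h v (List.mem_cons_of_mem a hv)),
        add_zero, ha, hb]
      exact hz

lemma sum_nonpos {L : List EReal} (h : ∀ x ∈ L, x ≤ 0) : L.sum ≤ 0 := by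
  induction L with
  | nil => simp
  | cons a L ih =>
      rw [List.sum_cons]
      calc a + L.sum ≤ 0 + 0 := add_le_add (h a (by simp)) (ih (fun x hx => h x (by simp [hx])))
        _ = 0 := add_zero 0

lemma mem_of_getLast?_eq {l : List (Fin m)} {a : Fin m} (h : l.getLast? = some a) : a ∈ l := by
  have h2 := List.dropLast_append_getLast? a (by rw [Option.mem_def]; exact h)
  rw [← h2]
  exact List.mem_append_right _ (by simp)

lemma mem_of_head?_eq {l : List (Fin m)} {a : Fin m} (h : l.head? = some a) : a ∈ l := by
  cases l with
  | nil => simp at h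
  | cons b t => simp at h; simp [h]

lemma path_closed_eq_singleton {B : Fin m → Fin m → EReal} {P : List (Fin m)}
    (hP : isPath B P) (hcl : P.head? = P.getLast?) : ∃ x, P = [x] := by
  obtain ⟨hw, hnd⟩ := hP
  match P, hw with
  | [x], _ => exact ⟨x, rfl⟩
  | a :: b :: t, _ =>
      exfalso
      have h1 : (a :: b :: t).head? = some a := rfl
      obtain ⟨y, hy⟩ : ∃ y, (b :: t).getLast? = some y := by
        cases h : (b :: t).getLast? with
        | none => exact absurd h (by simp)
        | some y => exact ⟨y, rfl⟩
      rw [List.getLast?_cons_cons, hy, h1] at hcl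
      have hay : a = y := by injection hcl
      have : a ∈ b :: t := hay ▸ mem_of_getLast?_eq hy
      exact (List.nodup_cons.mp hnd).1 this

/-! ### Walk decomposition into a path and cycles -/

lemma decomp (B : Fin m → Fin m → EReal) :
    ∀ (N : ℕ) (W : List (Fin m)), W.length ≤ N → isWalk B W →
    ∃ (P : List (Fin m)) (cyc : List (List (Fin m))),
      isPath B P ∧ P.head? = W.head? ∧ P.getLast? = W.getLast? ∧
      (∀ v ∈ P, v ∈ W) ∧
      (∀ C ∈ cyc, isCycle B C ∧ (∀ v ∈ C, v ∈ W.tail) ∧ (∀ v ∈ C, v ∈ W.dropLast)) ∧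
      W.length - 1 = (P.length - 1) + (cyc.map (fun C => C.length - 1)).sum ∧
      wWeight B W = wWeight B P + (cyc.map (wWeight B)).sum := by
  intro N
  induction N with
  | zero =>
      intro W hlen hW
      exact absurd (List.length_eq_zero_iff.mp (Nat.le_zero.mp hlen)) (isWalk_ne_nil hW)
  | succ N ih =>
      intro W hlen hW
      match W, hW with
      | [a], _ =>
          exact ⟨[a], [], ⟨isWalk_single B a, List.nodup_singleton a⟩, rfl, rfl, by simp,
            by simp, by simp, by simp [wWeight_single]⟩
      | a :: b :: t, hW' =>
          by_cases haT : a ∈ b :: t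
          · -- extract a cycle at the first repetition of `a`
            obtain ⟨T1, T2, hsplit, hnotin⟩ := exists_first_split haT
            have hWeq : a :: b :: t = (a :: T1) ++ a :: T2 := by rw [hsplit]; rfl
            have hWsplit := (isWalk_append_cons B (a :: T1) a T2).mp (by rw [← hWeq]; exact hW')
            have hlenW : (a :: b :: t).length = T1.length + T2.length + 2 := by
              rw [hWeq]; simp; omega
            have hlen2 : (a :: T2).length ≤ N := by
              simp only [List.length_cons] at hlen hlenW ⊢; omega
            obtain ⟨P, cyc, hP, hPh, hPl, hPmem, hcyc, hlens, hwt⟩ :=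
              ih (a :: T2) hlen2 hWsplit.2
            have hdropW : (a :: b :: t).dropLast = a :: (T1 ++ (a :: T2).dropLast) := by
              rw [hWeq, List.dropLast_append_cons, List.cons_append]
            refine ⟨P, ((a :: T1) ++ [a]) :: cyc, hP, ?_, ?_, ?_, ?_, ?_, ?_⟩
            · rw [hPh]; rfl
            · rw [hPl, hWeq, getLast?_append_cons]
            · intro v hv
              rcases List.mem_cons.mp (hPmem v hv) with h | h
              · simp [h]
              · rw [hsplit]
                exact List.mem_cons_of_mem _ (List.mem_append_right _ (List.mem_cons_of_mem _ h))
            · intro C hC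
              rcases List.mem_cons.mp hC with h | h
              · subst h
                have hmemC : ∀ v ∈ (a :: T1) ++ [a], v = a ∨ v ∈ T1 := by
                  intro v hv
                  rcases List.mem_append.mp hv with h | h
                  · rcases List.mem_cons.mp h with h | h
                    · exact Or.inl h
                    · exact Or.inr h
                  · exact Or.inl (List.mem_singleton.mp h)
                refine ⟨⟨hWsplit.1, by simp, by rw [List.getLast?_concat]; rfl⟩, ?_, ?_⟩
                · intro v hv
                  show v ∈ b :: t
                  rcases hmemC v hv with h | h
                  · exact h ▸ haT
                  · rw [hsplit]; exact List.mem_append_left _ h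
                · intro v hv
                  rw [hdropW]
                  rcases hmemC v hv with h | h
                  · exact h ▸ List.mem_cons_self
                  · exact List.mem_cons_of_mem _ (List.mem_append_left _ h)
              · obtain ⟨hC1, hC2, hC3⟩ := hcyc C h
                refine ⟨hC1, ?_, ?_⟩
                · intro v hv
                  show v ∈ b :: t
                  rw [hsplit]
                  exact List.mem_append_right _ (List.mem_cons_of_mem _ (hC2 v hv))
                · intro v hv
                  rw [hdropW]
                  exact List.mem_cons_of_mem _ (List.mem_append_right _ (hC3 v hv))
            · have hPlen : 1 ≤ P.length := by
                have := isWalk_ne_nil hP.1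
                cases P with
                | nil => exact absurd rfl this
                | cons _ _ => simp
              simp only [List.map_cons, List.sum_cons] at *
              simp only [List.length_cons, List.length_append, List.length_nil] at hlens hlenW ⊢
              omega
            · have : wWeight B (a :: b :: t) = wWeight B ((a :: T1) ++ [a]) + wWeight B (a :: T2) := by
                rw [hWeq]; exact wWeight_append_cons B (a :: T1) a T2
              rw [this, hwt, List.map_cons, List.sum_cons, ← add_assoc,
                add_comm (wWeight B ((a :: T1) ++ [a])) (wWeight B P), add_assoc]
          · -- `a` does not repeat: recurse on the tail
            have hWtail : isWalk B (b :: t) := ((isWalk_cons₂ B a b t).mp hW').2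
            have hlen2 : (b :: t).length ≤ N := by
              simp only [List.length_cons] at hlen ⊢; omega
            obtain ⟨P, cyc, hP, hPh, hPl, hPmem, hcyc, hlens, hwt⟩ := ih (b :: t) hlen2 hWtail
            obtain ⟨b', P', rfl⟩ : ∃ c P', P = c :: P' := by
              cases P with
              | nil => exact absurd rfl (isWalk_ne_nil hP.1)
              | cons c P' => exact ⟨c, P', rfl⟩
            have hb' : b' = b := by simpa using hPh
            refine ⟨a :: b' :: P', cyc, ⟨?_, ?_⟩, rfl, ?_, ?_, ?_, ?_, ?_⟩
            · refine (isWalk_cons₂ B a b' P').mpr ⟨?_, hP.1⟩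
              rw [hb']; exact ((isWalk_cons₂ B a b t).mp hW').1
            · exact List.nodup_cons.mpr ⟨fun hmem => haT (hPmem a hmem), hP.2⟩
            · rw [List.getLast?_cons_cons, hPl, List.getLast?_cons_cons]
            · intro v hv
              rcases List.mem_cons.mp hv with h | h
              · simp [h]
              · exact List.mem_cons_of_mem _ (hPmem v h)
            · intro C hC
              obtain ⟨hC1, hC2, hC3⟩ := hcyc C hC
              refine ⟨hC1, ?_, ?_⟩
              · intro v hv
                exact (List.tail_sublist (b :: t)).mem (hC2 v hv)
              · intro v hv
                rw [List.dropLast_cons₂]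
                exact List.mem_cons_of_mem _ (hC3 v hv)
            · simp only [List.length_cons] at hlens ⊢; omega
            · rw [wWeight_cons₂, hwt, wWeight_cons₂, add_assoc, hb']

end MaxPlusTransient

namespace MaxPlusTransient

variable {m : ℕ}

/-! ### `Gamma` as a supremum of weights of full walks -/

def fSet (A : ℕ → Fin m → Fin m → EReal) (k : ℕ) (i j : Fin m) : Set EReal :=
  {x | ∃ W : List (Fin m), W.length = k + 1 ∧ W.head? = some i ∧ W.getLast? = some j ∧
    x = tw A 0 W}

lemma fSet_finite (A : ℕ → Fin m → Fin m → EReal) (k : ℕ) (i j : Fin m) :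
    (fSet A k i j).Finite := by
  apply Set.Finite.subset ((List.finite_length_eq (Fin m) (k+1)).image (tw A 0))
  rintro x ⟨W, h1, _, _, rfl⟩
  exact ⟨W, h1, rfl⟩

lemma getLast?_cons_replicate (x : Fin m) (c : ℕ) :
    (x :: List.replicate c x).getLast? = some x := by
  have := getLast?_cons_replicate_append x c []
  simpa using this

lemma fSet_nonempty (A : ℕ → Fin m → Fin m → EReal) {k : ℕ} (hk : 1 ≤ k) (i j : Fin m) :
    (fSet A k i j).Nonempty := by
  obtain ⟨c, rfl⟩ : ∃ c, k = c + 1 := ⟨k - 1, by omega⟩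
  refine ⟨tw A 0 (i :: List.replicate (c+1) j), i :: List.replicate (c+1) j, by simp, rfl, ?_, rfl⟩
  rw [List.replicate_succ, List.getLast?_cons_cons, getLast?_cons_replicate]

lemma exists_head? {W : List (Fin m)} (h : W ≠ []) : ∃ a, W.head? = some a := by
  cases W with
  | nil => exact absurd rfl h
  | cons a t => exact ⟨a, rfl⟩

lemma exists_getLast? {W : List (Fin m)} (h : W ≠ []) : ∃ a, W.getLast? = some a := by
  cases hW : W.getLast? with
  | none => exact absurd (List.getLast?_eq_none_iff.mp hW) h
  | some a => exact ⟨a, rfl⟩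

lemma tw_concat (A : ℕ → Fin m → Fin m → EReal) {W : List (Fin m)} {s : Fin m}
    (hl : W.getLast? = some s) (j : Fin m) :
    tw A 0 (W ++ [j]) = tw A 0 W + A W.length s j := by
  have hWd : W.dropLast ++ [s] = W :=
    List.dropLast_append_getLast? s (Option.mem_def.mpr hl)
  have hWne : W ≠ [] := by intro h; rw [h] at hl; simp at hl
  have hDlen : W.dropLast.length = W.length - 1 := List.length_dropLast
  have h1 : tw A 0 (W ++ [j]) = tw A 0 (W.dropLast ++ s :: [j]) := by
    conv_lhs => rw [← hWd]
    rw [List.append_assoc]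
    rfl
  rw [h1, tw_append_cons A s [j] W.dropLast 0]
  rw [show tw A (0 + W.dropLast.length) (s :: [j]) =
      A (0 + W.dropLast.length + 1) s j + tw A (0 + W.dropLast.length + 1) [j] from rfl]
  rw [show tw A (0 + W.dropLast.length + 1) ([j] : List (Fin m)) = 0 from rfl, add_zero, hWd]
  congr 2
  have : 1 ≤ W.length := by cases W; exact absurd rfl hWne; simp
  omega

lemma Gamma_eq_sSup (A : ℕ → Fin m → Fin m → EReal) :
    ∀ (k : ℕ) (i j : Fin m), Gamma A k i j = sSup (fSet A k i j) := by
  intro k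
  induction k with
  | zero =>
      intro i j
      show (if i = j then (0 : EReal) else ⊥) = _
      by_cases hij : i = j
      · subst hij
        rw [if_pos rfl]
        have : fSet A 0 i i = {0} := by
          ext x
          constructor
          · rintro ⟨W, hlen, hh, hl, rfl⟩
            obtain ⟨a, rfl⟩ := List.length_eq_one_iff.mp hlen
            simp only [Set.mem_singleton_iff]
            rfl
          · rintro rfl
            exact ⟨[i], rfl, rfl, rfl, rfl⟩
        rw [this, csSup_singleton]
      · rw [if_neg hij]
        have : fSet A 0 i j = ∅ := by
          ext x
          simp only [Set.mem_empty_iff_false, iff_false]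
          rintro ⟨W, hlen, hh, hl, rfl⟩
          obtain ⟨a, rfl⟩ := List.length_eq_one_iff.mp hlen
          have h1 : a = i := by injection hh
          have h2 : a = j := by injection hl
          exact hij (h1 ▸ h2)
        rw [this, sSup_empty]
  | succ k ihk =>
      intro i j
      show ⨆ s, Gamma A k i s + A (k+1) s j = _
      apply le_antisymm
      · apply iSup_le
        intro s
        rw [ihk i s]
        rcases Set.eq_empty_or_nonempty (fSet A k i s) with he | hne
        · rw [he, sSup_empty, EReal.bot_add]; exact bot_le
        · obtain ⟨W, hlen, hh, hl, hx⟩ := hne.csSup_mem (fSet_finite A k i s)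
          have hWne : W ≠ [] := by intro h; rw [h] at hlen; simp at hlen
          have key : tw A 0 (W ++ [j]) = tw A 0 W + A (k+1) s j := by
            rw [tw_concat A hl j, hlen]
          have hmem : tw A 0 (W ++ [j]) ∈ fSet A (k+1) i j := by
            refine ⟨W ++ [j], by simp [hlen], ?_, List.getLast?_concat, rfl⟩
            rw [List.head?_append, hh]; rfl
          rw [hx, ← key]
          exact le_sSup hmem
      · apply sSup_le
        rintro x ⟨W, hlen, hh, hl, rfl⟩
        have hWne : W ≠ [] := by intro h; rw [h] at hlen; simp at hlen
        have hWd : W.dropLast ++ [j] = W :=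
          List.dropLast_append_getLast? j (Option.mem_def.mpr hl)
        have hDlen : W.dropLast.length = k + 1 := by
          rw [List.length_dropLast, hlen]
          omega
        have hDne : W.dropLast ≠ [] := by
          intro h; rw [h] at hDlen; simp at hDlen
        obtain ⟨s, hs⟩ := exists_getLast? hDne
        have key : tw A 0 W = tw A 0 W.dropLast + A (k+1) s j := by
          conv_lhs => rw [← hWd]
          rw [tw_concat A hs j, hDlen]
        have hDh : W.dropLast.head? = some i := by
          obtain ⟨d, hd⟩ := exists_head? hDne
          rw [← hWd, List.head?_append, hd] at hh
          rw [hd]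
          exact hh
        have hDmem : tw A 0 W.dropLast ∈ fSet A k i s := ⟨W.dropLast, hDlen, hDh, hs, rfl⟩
        calc tw A 0 W = tw A 0 W.dropLast + A (k+1) s j := key
          _ ≤ Gamma A k i s + A (k+1) s j := by
              rw [ihk i s]; exact add_le_add_left (le_sSup hDmem) _
          _ ≤ ⨆ s, Gamma A k i s + A (k+1) s j :=
              le_iSup (fun s => Gamma A k i s + A (k+1) s j) s

end MaxPlusTransient

namespace MaxPlusTransient

variable {m : ℕ}

/-! ### Splitting a non-simple cycle into two shorter cycles -/

lemma cycle_split (B : Fin m → Fin m → EReal) {C : List (Fin m)} (hC : isCycle B C)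
    (hnd : ¬ C.dropLast.Nodup) :
    ∃ C1 C2 : List (Fin m), isCycle B C1 ∧ isCycle B C2 ∧
      (∀ v ∈ C1, v ∈ C) ∧ (∀ v ∈ C2, v ∈ C) ∧
      C1.length + C2.length = C.length + 1 ∧ 2 ≤ C1.length ∧ 2 ≤ C2.length ∧
      C1.length < C.length ∧ C2.length < C.length ∧
      wWeight B C = wWeight B C1 + wWeight B C2 := by
  obtain ⟨hCw, hClen, hCcl⟩ := hC
  have hCne : C ≠ [] := isWalk_ne_nil hCw
  obtain ⟨a0, ha0⟩ := exists_getLast? hCne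
  have hhead : C.head? = some a0 := hCcl.trans ha0
  have hCd : C.dropLast ++ [a0] = C := List.dropLast_append_getLast? a0 (Option.mem_def.mpr ha0)
  obtain ⟨x, X, Y, Z, hsplit⟩ := not_nodup_split hnd
  have hCeq : C = X ++ x :: (Y ++ x :: (Z ++ [a0])) := by
    rw [← hCd, hsplit]
    simp [List.append_assoc]
  set E := Z ++ [a0] with hE
  -- walks
  have hw1 := (isWalk_append_cons B X x (Y ++ x :: E)).mp (by rw [← hCeq]; exact hCw)
  have hw2 := (isWalk_append_cons B (x :: Y) x E).mp
    (by rw [← List.cons_append]; exact hw1.2)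
  set C1 := (x :: Y) ++ [x] with hC1
  set C2 := X ++ x :: E with hC2
  have hwC2 : isWalk B C2 := (isWalk_append_cons B X x E).mpr ⟨hw1.1, hw2.2⟩
  have hcyc1 : isCycle B C1 := ⟨hw2.1, by simp [hC1], by rw [hC1, List.getLast?_concat]; rfl⟩
  have hgl2 : C2.getLast? = some a0 := by
    rw [hC2, getLast?_append_cons, hE, ← List.cons_append, List.getLast?_concat]
  have hhd2 : C2.head? = some a0 := by
    rw [hC2, head?_append_cons X x E (Y ++ x :: E), ← hCeq]
    exact hhead
  have hElen : E.length = Z.length + 1 := by rw [hE]; simp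
  have hlenC : C.length = X.length + Y.length + Z.length + 3 := by
    rw [hCeq]; simp only [List.length_append, List.length_cons]; omega
  have hlen1 : C1.length = Y.length + 2 := by
    rw [hC1]; simp only [List.length_append, List.length_cons, List.length_nil]
  have hlen2' : C2.length = X.length + Z.length + 2 := by
    rw [hC2]; simp only [List.length_append, List.length_cons]; omega
  have hcyc2 : isCycle B C2 := ⟨hwC2, by omega, by rw [hgl2, hhd2]⟩
  have hwt : wWeight B C = wWeight B C1 + wWeight B C2 := by
    have e1 : wWeight B C = wWeight B (X ++ [x]) + wWeight B (x :: (Y ++ x :: E)) := by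
      rw [hCeq]; exact wWeight_append_cons B X x (Y ++ x :: E)
    have e2 : wWeight B (x :: (Y ++ x :: E)) = wWeight B C1 + wWeight B (x :: E) := by
      rw [← List.cons_append, wWeight_append_cons B (x :: Y) x E, hC1]
    have e3 : wWeight B C2 = wWeight B (X ++ [x]) + wWeight B (x :: E) := by
      rw [hC2]; exact wWeight_append_cons B X x E
    rw [e1, e2, e3, ← add_assoc, add_comm (wWeight B (X ++ [x])) (wWeight B C1), add_assoc]
  refine ⟨C1, C2, hcyc1, hcyc2, ?_, ?_, by omega, by omega, by omega, by omega, by omega, hwt⟩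
  · intro v hv
    rw [hCeq]
    have : v = x ∨ v ∈ Y := by
      rw [hC1] at hv
      rcases List.mem_append.mp hv with h | h
      · rcases List.mem_cons.mp h with h | h
        · exact Or.inl h
        · exact Or.inr h
      · exact Or.inl (List.mem_singleton.mp h)
    rcases this with h | h
    · subst h; exact List.mem_append_right _ (List.mem_cons_self)
    · exact List.mem_append_right _ (List.mem_cons_of_mem _ (List.mem_append_left _ h))
  · intro v hv
    rw [hCeq]
    rw [hC2] at hv
    rcases List.mem_append.mp hv with h | h
    · exact List.mem_append_left _ h
    · rcases List.mem_cons.mp h with h | h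
      · subst h; exact List.mem_append_right _ (List.mem_cons_self)
      · exact List.mem_append_right _ (List.mem_cons_of_mem _ (List.mem_append_right _
          (List.mem_cons_of_mem _ h)))

lemma exists_simple_cycle (B : Fin m → Fin m → EReal) {o : Fin m} :
    ∀ (N : ℕ) (C : List (Fin m)), C.length ≤ N → isCycle B C → (∀ v ∈ C, v ≠ o) →
      ∃ C', isCycle B C' ∧ (∀ v ∈ C', v ≠ o) ∧ C'.dropLast.Nodup ∧ C'.length ≤ m + 1 := by
  intro N
  induction N with
  | zero => intro C hlen hC _; have := hC.2.1; omega
  | succ N ih =>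
      intro C hlen hC hav
      by_cases hnd : C.dropLast.Nodup
      · refine ⟨C, hC, hav, hnd, ?_⟩
        have h1 : C.dropLast.length ≤ m := by
          have := List.Nodup.length_le_card hnd
          simpa [Fintype.card_fin] using this
        have h2 : C.dropLast.length = C.length - 1 := List.length_dropLast
        have := hC.2.1
        omega
      · obtain ⟨C1, C2, h1, h2, hm1, hm2, hsum, hl1, hl2, hlt1, hlt2, hwt⟩ :=
          cycle_split B hC hnd
        exact ih C1 (by omega) h1 (fun v hv => hav v (hm1 v hv))

lemma cycle_le_of_simple_le (B : Fin m → Fin m → EReal) (htop : ∀ i j, B i j ≠ ⊤) {o : Fin m}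
    {lam0 : ℝ}
    (hs : ∀ C, isCycle B C → (∀ v ∈ C, v ≠ o) → C.dropLast.Nodup →
      ∃ r : ℝ, wWeight B C = (r : EReal) ∧ r ≤ lam0 * ((C.length : ℝ) - 1)) :
    ∀ (N : ℕ) (C : List (Fin m)), C.length ≤ N → isCycle B C → (∀ v ∈ C, v ≠ o) →
      ∃ r : ℝ, wWeight B C = (r : EReal) ∧ r ≤ lam0 * ((C.length : ℝ) - 1) := by
  intro N
  induction N with
  | zero => intro C hlen hC _; have := hC.2.1; omega
  | succ N ih =>
      intro C hlen hC hav
      by_cases hnd : C.dropLast.Nodup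
      · exact hs C hC hav hnd
      · obtain ⟨C1, C2, h1, h2, hm1, hm2, hsum, hl1, hl2, hlt1, hlt2, hwt⟩ :=
          cycle_split B hC hnd
        obtain ⟨r1, hr1, hb1⟩ := ih C1 (by omega) h1 (fun v hv => hav v (hm1 v hv))
        obtain ⟨r2, hr2, hb2⟩ := ih C2 (by omega) h2 (fun v hv => hav v (hm2 v hv))
        refine ⟨r1 + r2, by rw [hwt, hr1, hr2, EReal.coe_add], ?_⟩
        have hcast : (C1.length : ℝ) + (C2.length : ℝ) = (C.length : ℝ) + 1 := by
          exact_mod_cast congrArg (fun n : ℕ => (n : ℝ)) hsum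
        have hkey : lam0 * ((C1.length : ℝ) - 1) + lam0 * ((C2.length : ℝ) - 1)
            = lam0 * ((C.length : ℝ) - 1) := by
          rw [← mul_add]; congr 1; linarith
        linarith

/-- All the facts we need about `lamStar`. -/
lemma lamStar_facts (B : Fin m → Fin m → EReal) (o : Fin m) (htop : ∀ i j, B i j ≠ ⊤)
    (hneg : ∀ W, isCycle B W → (∃ v ∈ W, v ≠ o) → wWeight B W < 0)
    (hex : ∃ W, isCycle B W ∧ ∀ v ∈ W, v ≠ o) :
    lamStar B o < 0 ∧
      ∀ C, isCycle B C → (∀ v ∈ C, v ≠ o) →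
        ∃ r : ℝ, wWeight B C = (r : EReal) ∧ r ≤ lamStar B o * ((C.length : ℝ) - 1) := by
  -- basic facts about cycles avoiding `o`
  have hwit : ∀ C : List (Fin m), isCycle B C → (∀ v ∈ C, v ≠ o) → ∃ v ∈ C, v ≠ o := by
    intro C hC hav
    obtain ⟨a, ha⟩ := exists_head? (isWalk_ne_nil hC.1)
    exact ⟨a, mem_of_head?_eq ha, hav a (mem_of_head?_eq ha)⟩
  have hreal : ∀ C : List (Fin m), isCycle B C → (∀ v ∈ C, v ≠ o) →
      ∃ r : ℝ, wWeight B C = (r : EReal) ∧ r < 0 := by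
    intro C hC hav
    obtain ⟨r, hr⟩ := walk_real htop hC.1
    refine ⟨r, hr, ?_⟩
    have := hneg C hC (hwit C hC hav)
    rw [hr] at this
    exact_mod_cast this
  have hden : ∀ C : List (Fin m), isCycle B C → (0 : ℝ) < (C.length : ℝ) - 1 := by
    intro C hC
    have := hC.2.1
    have h2 : (2 : ℝ) ≤ (C.length : ℝ) := by exact_mod_cast this
    linarith
  have hbdd : BddAbove (lamSet B o) := by
    refine ⟨0, ?_⟩
    rintro x ⟨C, hC, hav, r, hr, rfl⟩
    obtain ⟨r', hr', hneg'⟩ := hreal C hC hav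
    have : r = r' := by rw [hr] at hr'; exact_mod_cast hr'
    subst this
    exact le_of_lt (div_neg_of_neg_of_pos hneg' (hden C hC))
  have hmean_le : ∀ C, isCycle B C → (∀ v ∈ C, v ≠ o) → ∀ r : ℝ, wWeight B C = (r : EReal) →
      r / ((C.length : ℝ) - 1) ≤ lamStar B o := by
    intro C hC hav r hr
    exact le_csSup hbdd ⟨C, hC, hav, r, hr, rfl⟩
  have hbound : ∀ C, isCycle B C → (∀ v ∈ C, v ≠ o) →
      ∃ r : ℝ, wWeight B C = (r : EReal) ∧ r ≤ lamStar B o * ((C.length : ℝ) - 1) := by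
    intro C hC hav
    obtain ⟨r, hr, _⟩ := hreal C hC hav
    exact ⟨r, hr, (div_le_iff₀ (hden C hC)).mp (hmean_le C hC hav r hr)⟩
  refine ⟨?_, hbound⟩
  -- now prove `lamStar < 0` via simple cycles
  obtain ⟨C0, hC0, hav0⟩ := hex
  -- the finite set of simple cycles avoiding `o`
  set SC : Set (List (Fin m)) :=
    {C | isCycle B C ∧ (∀ v ∈ C, v ≠ o) ∧ C.length ≤ m + 1} with hSC
  have hSCfin : SC.Finite :=
    Set.Finite.subset (List.finite_length_le (Fin m) (m + 1)) (fun C hC => hC.2.2)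
  set means : Set ℝ := (fun C => (wWeight B C).toReal / ((C.length : ℝ) - 1)) '' SC with hmeans
  have hmfin : means.Finite := hSCfin.image _
  obtain ⟨C0', h1', h2', h3', h4'⟩ := exists_simple_cycle B C0.length C0 le_rfl hC0 hav0
  have hmne : means.Nonempty := ⟨_, ⟨C0', ⟨h1', h2', h4'⟩, rfl⟩⟩
  set lam0 : ℝ := sSup means with hlam0
  have hlam0mem : lam0 ∈ means := hmne.csSup_mem hmfin
  have hlam0neg : lam0 < 0 := by
    obtain ⟨C, ⟨hC, hav, _⟩, heq⟩ := hlam0mem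
    obtain ⟨r, hr, hrneg⟩ := hreal C hC hav
    have heq' : (wWeight B C).toReal / ((C.length : ℝ) - 1) = lam0 := heq
    rw [← heq', hr, EReal.toReal_coe]
    exact div_neg_of_neg_of_pos hrneg (hden C hC)
  have hsimple : ∀ C, isCycle B C → (∀ v ∈ C, v ≠ o) → C.dropLast.Nodup →
      ∃ r : ℝ, wWeight B C = (r : EReal) ∧ r ≤ lam0 * ((C.length : ℝ) - 1) := by
    intro C hC hav hnd
    obtain ⟨r, hr, _⟩ := hreal C hC hav
    have hlenle : C.length ≤ m + 1 := by
      have h1 : C.dropLast.length ≤ m := by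
        have := List.Nodup.length_le_card hnd
        simpa [Fintype.card_fin] using this
      have h2 : C.dropLast.length = C.length - 1 := List.length_dropLast
      have := hC.2.1
      omega
    have hmem : r / ((C.length : ℝ) - 1) ∈ means := by
      refine ⟨C, ⟨hC, hav, hlenle⟩, ?_⟩
      show (wWeight B C).toReal / ((C.length : ℝ) - 1) = r / ((C.length : ℝ) - 1)
      rw [hr, EReal.toReal_coe]
    have hle0 : r / ((C.length : ℝ) - 1) ≤ lam0 := le_csSup (hmfin.bddAbove) hmem
    exact ⟨r, hr, (div_le_iff₀ (hden C hC)).mp hle0⟩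
  have hallcyc := cycle_le_of_simple_le B htop hsimple
  have hlamSetne : (lamSet B o).Nonempty := by
    obtain ⟨r, hr, _⟩ := hreal C0 hC0 hav0
    exact ⟨r / ((C0.length : ℝ) - 1), C0, hC0, hav0, r, hr, rfl⟩
  have hle : lamStar B o ≤ lam0 := by
    apply csSup_le hlamSetne
    rintro x ⟨C, hC, hav, r, hr, rfl⟩
    obtain ⟨r', hr', hb⟩ := hallcyc C.length C le_rfl hC hav
    have : r = r' := by rw [hr] at hr'; exact_mod_cast hr'
    subst this
    rw [div_le_iff₀ (hden C hC)]
    exact hb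
  exact hle.trans_lt hlam0neg

end MaxPlusTransient

namespace MaxPlusTransient

variable {m : ℕ}

lemma closed_walk_nonpos (B : Fin m → Fin m → EReal) {o : Fin m} (h00 : B o o = 0)
    (hneg : ∀ W, isCycle B W → (∃ v ∈ W, v ≠ o) → wWeight B W < 0)
    {W : List (Fin m)} (hW : isWalk B W) (hcl : W.head? = W.getLast?) :
    wWeight B W ≤ 0 := by
  obtain ⟨P, cyc, hP, hPh, hPl, _, hcyc, _, hwt⟩ := decomp B W.length W le_rfl hW
  have hPsing : wWeight B P = 0 := by
    obtain ⟨x, rfl⟩ := path_closed_eq_singleton hP (by rw [hPh, hPl, hcl])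
    rfl
  rw [hwt, hPsing, zero_add]
  apply sum_nonpos
  intro w hw
  obtain ⟨C, hCmem, rfl⟩ := List.mem_map.mp hw
  obtain ⟨hC1, -, -⟩ := hcyc C hCmem
  by_cases hall : ∀ v ∈ C, v = o
  · rw [wWeight_all_eq h00 hall]
  · push_neg at hall
    obtain ⟨v, hv1, hv2⟩ := hall
    exact le_of_lt (hneg C hC1 ⟨v, hv1, hv2⟩)

lemma cyc_sum_bound (B : Fin m → Fin m → EReal) {o : Fin m} {lam : ℝ}
    (hmeanbd : ∀ C, isCycle B C → (∀ v ∈ C, v ≠ o) →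
      ∃ r : ℝ, wWeight B C = (r : EReal) ∧ r ≤ lam * ((C.length : ℝ) - 1)) :
    ∀ cyc : List (List (Fin m)), (∀ C ∈ cyc, isCycle B C ∧ ∀ v ∈ C, v ≠ o) →
      ∃ rs : ℝ, (cyc.map (wWeight B)).sum = (rs : EReal) ∧
        rs ≤ lam * (((cyc.map (fun C => C.length - 1)).sum : ℕ) : ℝ) := by
  intro cyc
  induction cyc with
  | nil => intro _; exact ⟨0, by simp, by simp⟩
  | cons C cyc ih =>
      intro h
      obtain ⟨rs, h1, h2⟩ := ih (fun C' hC' => h C' (List.mem_cons_of_mem _ hC'))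
      have hCmem := h C (List.mem_cons_self)
      obtain ⟨rC, hrC1, hrC2⟩ := hmeanbd C hCmem.1 hCmem.2
      refine ⟨rC + rs, by rw [List.map_cons, List.sum_cons, hrC1, h1, EReal.coe_add], ?_⟩
      have hClen : 1 ≤ C.length := by have := hCmem.1.2.1; omega
      have hc1 : (((C.length - 1 : ℕ)) : ℝ) = (C.length : ℝ) - 1 := by
        push_cast [Nat.cast_sub hClen]; ring
      have hthis : rC ≤ lam * (((C.length - 1 : ℕ)) : ℝ) := by rw [hc1]; exact hrC2
      rw [List.map_cons, List.sum_cons, Nat.cast_add, mul_add]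
      exact add_le_add hthis h2

lemma walk_decomp_bound (B : Fin m → Fin m → EReal) {o : Fin m} (htop : ∀ i j, B i j ≠ ⊤)
    (hmeanbd : ∀ C, isCycle B C → (∀ v ∈ C, v ≠ o) →
      ∃ r : ℝ, wWeight B C = (r : EReal) ∧ r ≤ lamStar B o * ((C.length : ℝ) - 1))
    {W : List (Fin m)} (hW : isWalk B W)
    (hav : ∀ v, v ∈ W.tail → v ∈ W.dropLast → v ≠ o) :
    ∃ (P : List (Fin m)) (r rp : ℝ), isPath B P ∧ P.head? = W.head? ∧
      P.getLast? = W.getLast? ∧ (∀ v ∈ P, v ∈ W) ∧ P.length ≤ m ∧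
      wWeight B W = (r : EReal) ∧ wWeight B P = (rp : EReal) ∧
      r ≤ rp + lamStar B o * (((W.length : ℝ) - 1) - ((P.length : ℝ) - 1)) := by
  obtain ⟨P, cyc, hP, hPh, hPl, hPm, hcyc, hlens, hwt⟩ := decomp B W.length W le_rfl hW
  have hcav : ∀ C ∈ cyc, isCycle B C ∧ ∀ v ∈ C, v ≠ o := fun C hC =>
    ⟨(hcyc C hC).1, fun v hv => hav v ((hcyc C hC).2.1 v hv) ((hcyc C hC).2.2 v hv)⟩
  obtain ⟨rs, hrs1, hrs2⟩ := cyc_sum_bound B hmeanbd cyc hcav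
  obtain ⟨rp, hrp⟩ := walk_real htop hP.1
  refine ⟨P, rp + rs, rp, hP, hPh, hPl, hPm, ?_, ?_, hrp, ?_⟩
  · have := List.Nodup.length_le_card hP.2
    simpa [Fintype.card_fin] using this
  · rw [hwt, hrp, hrs1, EReal.coe_add]
  · have hWlen : 1 ≤ W.length := by
      have := isWalk_ne_nil hW
      cases W; exact absurd rfl this; simp
    have hPlen : 1 ≤ P.length := by
      have := isWalk_ne_nil hP.1
      cases P; exact absurd rfl this; simp
    have hcast : (((cyc.map (fun C => C.length - 1)).sum : ℕ) : ℝ)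
        = ((W.length : ℝ) - 1) - ((P.length : ℝ) - 1) := by
      have h1 : W.length - 1 = (P.length - 1) + (cyc.map (fun C => C.length - 1)).sum := hlens
      have h2 : W.length = P.length + (cyc.map (fun C => C.length - 1)).sum := by omega
      have h3 := congrArg (fun n : ℕ => (n : ℝ)) h2
      simp only [Nat.cast_add] at h3
      linarith
    rw [← hcast]
    linarith [hrs2]

lemma wWeight_le_const {B : Fin m → Fin m → EReal} {c : ℝ} (hc : ∀ i j, B i j ≤ (c : EReal))
    (hc0 : 0 ≤ c) :
    ∀ W : List (Fin m), wWeight B W ≤ (((W.length : ℝ) * c : ℝ) : EReal)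
  | [] => by
      show (0 : EReal) ≤ _
      simp
  | [a] => by
      have h1 : ((([a] : List (Fin m)).length : ℝ) * c) = c := by simp
      rw [show wWeight B [a] = (0 : EReal) from rfl, h1]
      exact_mod_cast hc0
  | a :: b :: t => by
      rw [wWeight_cons₂]
      have h1 := wWeight_le_const hc hc0 (b :: t)
      have h2 := hc a b
      calc B a b + wWeight B (b :: t) ≤ (c : EReal) + ((((b :: t).length : ℝ) * c : ℝ) : EReal) :=
            add_le_add h2 h1
        _ = (((c + ((b :: t).length : ℝ) * c) : ℝ) : EReal) := by rw [EReal.coe_add]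
        _ = ((((a :: b :: t).length : ℝ) * c : ℝ) : EReal) := by
            norm_cast
            simp only [List.length_cons]
            push_cast
            ring

lemma ereal_exists_real {x : EReal} (hbot : x ≠ ⊥) (htop : x ≠ ⊤) : ∃ r : ℝ, x = (r : EReal) :=
  ⟨x.toReal, (EReal.coe_toReal htop hbot).symm⟩

end MaxPlusTransient

namespace MaxPlusTransient

variable {m : ℕ}

lemma head?_replicate_cons (c : ℕ) (x : Fin m) (V : List (Fin m)) :
    (List.replicate c x ++ x :: V).head? = some x := by
  cases c with
  | zero => rfl
  | succ c => rw [List.replicate_succ]; rfl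

lemma replicate_concat (c : ℕ) (x : Fin m) :
    List.replicate c x ++ [x] = x :: List.replicate c x := by
  rw [← List.replicate_succ', List.replicate_succ]

lemma pad_after {A : ℕ → Fin m → Fin m → EReal} {Ainf : Fin m → Fin m → EReal} {o : Fin m}
    {k : ℕ} (hle : ∀ l, 1 ≤ l → l ≤ k → ∀ a b, Ainf a b ≤ A l a b)
    (h00 : ∀ l, 1 ≤ l → l ≤ k → A l o o = 0)
    {W : List (Fin m)} {i : Fin m} (hlen1 : 1 ≤ W.length) (hlenk : W.length - 1 ≤ k)
    (hh : W.head? = some i) (hl : W.getLast? = some o) :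
    ∃ x ∈ fSet A k i o, wWeight Ainf W ≤ x := by
  have hD : W.dropLast ++ [o] = W := List.dropLast_append_getLast? o (Option.mem_def.mpr hl)
  set c := k + 1 - W.length with hc
  have hDlen : W.dropLast.length = W.length - 1 := List.length_dropLast
  set W2 := W.dropLast ++ o :: List.replicate c o with hW2
  have hzero : tw A (0 + W.dropLast.length) (o :: List.replicate c o) = 0 := by
    apply tw_cons_replicate
    intro l h1 h2
    exact h00 l (by omega) (by omega)
  have key : tw A 0 W2 = tw A 0 W := by
    rw [hW2, tw_append_cons A o (List.replicate c o) W.dropLast 0, hzero, add_zero, hD]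
  have hmono : wWeight Ainf W ≤ tw A 0 W := by
    apply tw_mono W 0
    intro l a b h1 h2
    exact hle l h1 (by omega) a b
  refine ⟨tw A 0 W2, ⟨W2, ?_, ?_, ?_, rfl⟩, by rw [key]; exact hmono⟩
  · rw [hW2]
    simp only [List.length_append, List.length_cons, List.length_replicate, hDlen]
    omega
  · rw [hW2, head?_append_cons W.dropLast o (List.replicate c o) []]
    show (W.dropLast ++ [o]).head? = some i
    rw [hD]
    exact hh
  · rw [hW2, getLast?_append_cons, getLast?_cons_replicate]

lemma pad_before {A : ℕ → Fin m → Fin m → EReal} {Ainf : Fin m → Fin m → EReal} {o : Fin m}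
    {k : ℕ} (hle : ∀ l, 1 ≤ l → l ≤ k → ∀ a b, Ainf a b ≤ A l a b)
    (h00 : ∀ l, 1 ≤ l → l ≤ k → A l o o = 0)
    {W : List (Fin m)} {j : Fin m} (hlen1 : 1 ≤ W.length) (hlenk : W.length - 1 ≤ k)
    (hh : W.head? = some o) (hl : W.getLast? = some j) :
    ∃ x ∈ fSet A k o j, wWeight Ainf W ≤ x := by
  obtain ⟨T, rfl⟩ : ∃ T, W = o :: T := by
    cases W with
    | nil => simp at hlen1
    | cons a T =>
        have : a = o := by injection hh
        exact ⟨T, by rw [this]⟩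
  have hTk : T.length ≤ k := by
    simp only [List.length_cons] at hlenk; omega
  set c := k - T.length with hc
  set W2 := List.replicate c o ++ o :: T with hW2
  have hzero : tw A 0 (List.replicate c o ++ [o]) = 0 := by
    rw [replicate_concat]
    apply tw_cons_replicate
    intro l h1 h2
    exact h00 l (by omega) (by omega)
  have key : tw A 0 W2 = tw A (0 + c) (o :: T) := by
    rw [hW2, tw_append_cons A o T (List.replicate c o) 0, hzero, zero_add,
      List.length_replicate]
  have hmono : wWeight Ainf (o :: T) ≤ tw A (0 + c) (o :: T) := by
    rw [wWeight, tw_const Ainf (o :: T) 0 (0 + c)]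
    apply tw_mono (o :: T) (0 + c)
    intro l a b h1 h2
    simp only [List.length_cons] at h2
    exact hle l (by omega) (by omega) a b
  refine ⟨tw A 0 W2, ⟨W2, ?_, ?_, ?_, rfl⟩, by rw [key]; exact hmono⟩
  · rw [hW2]
    simp only [List.length_append, List.length_cons, List.length_replicate]
    omega
  · rw [hW2]; exact head?_replicate_cons c o T
  · rw [hW2, getLast?_append_cons]; exact hl

end MaxPlusTransient

namespace MaxPlusTransient

/-- the main theorem, matrix (rank-one) form, with the explicit (coarser)
bound computed from `A^inf`. -/
theorem rank_one_transient_statement7 {n : ℕ}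
    (𝒳 : Set (Fin (n + 2) → Fin (n + 2) → EReal))
    (Asup Ainf : Fin (n + 2) → Fin (n + 2) → EReal)
    (hstand : Standing 𝒳 Asup Ainf 0)
    (k : ℕ) (hk : 1 ≤ k)
    (A : ℕ → Fin (n + 2) → Fin (n + 2) → EReal)
    (hA : ∀ l, 1 ≤ l → l ≤ k → A l ∈ 𝒳)
    (hcyc : ∃ W, isCycle Asup W ∧ ∀ v ∈ W, v ≠ (0 : Fin (n + 2)))
    (a b w v : Fin (n + 2) → ℝ)
    (ha : ∀ i, ((a i : ℝ) : EReal) = alphaE Asup 0 i)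
    (hb : ∀ j, ((b j : ℝ) : EReal) = betaE Asup 0 j)
    (hw : ∀ i, ((w i : ℝ) : EReal) = wInf Ainf 0 k i)
    (hv : ∀ j, ((v j : ℝ) : EReal) = vInf Ainf 0 k j)
    -- `k` exceeds the bound for every pair `(i, j)`; the term involving `γ_{i,j}` is
    -- omitted from the maximum whenever `γ_{i,j} = -∞`
    (hk1 : ∀ i j, ∀ g : ℝ, gammaE Asup 0 i j = (g : EReal) →
      (k : ℝ) > (w i + v j - g) / lamStar Asup 0 + ((n + 2 : ℝ) - 1))
    (hk2 : ∀ i j, (k : ℝ) >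
      (w i - a i + v j - b j) / lamStar Asup 0 + 2 * ((n + 2 : ℝ) - 1)) :
    ∀ i j, Gamma A k i j = Gamma A k i 0 + Gamma A k 0 j := by
  obtain ⟨hne, hXtop, hsupdef, hinfdef, hsuptop, hinfbot, hXirr, hinfirr, hgeom, hX00,
    hXcyc, hsup00, hsupcyc⟩ := hstand
  have hA00 : ∀ l, 1 ≤ l → l ≤ k → A l 0 0 = (0 : EReal) := fun l h1 h2 => hX00 _ (hA l h1 h2)
  have hAle : ∀ l, 1 ≤ l → l ≤ k → ∀ p q, A l p q ≤ Asup p q := by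
    intro l h1 h2 p q
    rw [hsupdef]
    exact le_biSup (fun X => X p q) (hA l h1 h2)
  have hAinfle : ∀ l, 1 ≤ l → l ≤ k → ∀ p q, Ainf p q ≤ A l p q := by
    intro l h1 h2 p q
    rw [hinfdef]
    exact iInf₂_le (A l) (hA l h1 h2)
  obtain ⟨hlamneg, hmeanbd⟩ := lamStar_facts Asup 0 hsuptop hsupcyc hcyc
  set lam : ℝ := lamStar Asup 0 with hlamdef
  have hlamne : lam ≠ 0 := ne_of_lt hlamneg
  -- weight/walk transfer helpers
  have htwle : ∀ (s' : ℕ) (L : List (Fin (n+2))), s' + (L.length - 1) ≤ k →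
      tw A s' L ≤ wWeight Asup L := by
    intro s' L hsk
    calc tw A s' L ≤ tw (fun _ => Asup) s' L := by
          apply tw_mono L s'
          intro l p q h1 h2
          exact hAle l (by omega) (by omega) p q
      _ = wWeight Asup L := tw_const Asup L s' 0
  have htransfer : ∀ (s' : ℕ) (L : List (Fin (n+2))), s' + (L.length - 1) ≤ k →
      twalk A s' L → isWalk Asup L := by
    intro s' L hsk htw
    have h1 : twalk (fun _ => Asup) s' L := by
      apply twalk_mono L s' ?_ htw
      intro l p q h1 h2 hne2 hbad
      exact hne2 (le_bot_iff.mp (hbad ▸ hAle l (by omega) (by omega) p q))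
    exact twalk_const Asup L s' 0 h1
  -- lower bounds for the first column / first row of `Gamma`
  have hGw : ∀ i, ((w i : ℝ) : EReal) ≤ Gamma A k i 0 := by
    intro i
    rw [hw i, Gamma_eq_sSup]
    simp only [wInf]
    apply sSup_le
    rintro x ⟨W, hWalk, hlk, hh', hl', rfl⟩
    have hlen1 : 1 ≤ W.length := by
      have := isWalk_ne_nil hWalk
      cases W
      · exact absurd rfl this
      · simp
    obtain ⟨y, hy, hxy⟩ := pad_after (fun l h1 h2 p q => hAinfle l h1 h2 p q)
      hA00 hlen1 hlk hh' hl'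
    exact hxy.trans (le_sSup hy)
  have hGv : ∀ j, ((v j : ℝ) : EReal) ≤ Gamma A k 0 j := by
    intro j
    rw [hv j, Gamma_eq_sSup]
    simp only [vInf]
    apply sSup_le
    rintro x ⟨W, hWalk, hlk, hh', hl', rfl⟩
    have hlen1 : 1 ≤ W.length := by
      have := isWalk_ne_nil hWalk
      cases W
      · exact absurd rfl this
      · simp
    obtain ⟨y, hy, hxy⟩ := pad_before (fun l h1 h2 p q => hAinfle l h1 h2 p q)
      hA00 hlen1 hlk hh' hl'
    exact hxy.trans (le_sSup hy)
  -- a uniform real upper bound on the entries of `Asup`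
  obtain ⟨c0, hc00, hc0⟩ : ∃ c : ℝ, 0 ≤ c ∧ ∀ p q : Fin (n+2), Asup p q ≤ (c : EReal) := by
    refine ⟨(Finset.univ.sup' (Finset.univ_nonempty)
      (fun pq : Fin (n+2) × Fin (n+2) => (Asup pq.1 pq.2).toReal)) ⊔ 0, le_sup_right, ?_⟩
    intro p q
    by_cases hbq : Asup p q = ⊥
    · rw [hbq]; exact bot_le
    · have heq : ((Asup p q).toReal : EReal) = Asup p q := EReal.coe_toReal (hsuptop p q) hbq
      rw [← heq]
      apply EReal.coe_le_coe_iff.mpr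
      exact le_trans (Finset.le_sup'
        (fun pq : Fin (n+2) × Fin (n+2) => (Asup pq.1 pq.2).toReal)
        (Finset.mem_univ (p, q))) le_sup_left
  intro i j
  apply le_antisymm
  · -- `Gamma i j ≤ Gamma i 0 + Gamma 0 j`
    rw [Gamma_eq_sSup A k i j]
    obtain ⟨W, hlen, hh, hl, hx⟩ :=
      (fSet_nonempty A hk i j).csSup_mem (fSet_finite A k i j)
    rw [hx]
    by_cases hmem0 : (0 : Fin (n+2)) ∈ W
    · -- the optimal walk passes through node 0: split it there
      obtain ⟨U, V, hWeq, -⟩ := exists_first_split hmem0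
      subst hWeq
      have hUlen : U.length + 1 + V.length = k + 1 := by
        simp only [List.length_append, List.length_cons] at hlen; omega
      have hsplit := tw_append_cons A (0 : Fin (n+2)) V U 0
      have hp1 : tw A 0 (U ++ [(0 : Fin (n+2))]) ≤ Gamma A k i 0 := by
        rw [Gamma_eq_sSup A k i 0]
        set c := k - U.length with hcdef
        have hzero : tw A (0 + U.length) ((0 : Fin (n+2)) :: List.replicate c 0) = 0 := by
          apply tw_cons_replicate
          intro l h1 h2
          exact hA00 l (by omega) (by omega)
        have hW1 : tw A 0 (U ++ (0 : Fin (n+2)) :: List.replicate c 0)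
            = tw A 0 (U ++ [(0 : Fin (n+2))]) := by
          rw [tw_append_cons A (0 : Fin (n+2)) (List.replicate c 0) U 0, hzero, add_zero]
        rw [← hW1]
        apply le_sSup
        refine ⟨U ++ (0 : Fin (n+2)) :: List.replicate c 0, ?_, ?_, ?_, rfl⟩
        · simp only [List.length_append, List.length_cons, List.length_replicate]; omega
        · rw [head?_append_cons U (0 : Fin (n+2)) (List.replicate c 0) V]; exact hh
        · rw [getLast?_append_cons, getLast?_cons_replicate]
      have hp2 : tw A (0 + U.length) ((0 : Fin (n+2)) :: V) ≤ Gamma A k 0 j := by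
        rw [Gamma_eq_sSup A k 0 j]
        have hrep : List.replicate U.length (0 : Fin (n+2)) ++ [(0 : Fin (n+2))]
            = (0 : Fin (n+2)) :: List.replicate U.length 0 := replicate_concat U.length 0
        have hzero : tw A 0 (List.replicate U.length (0 : Fin (n+2)) ++ [(0 : Fin (n+2))])
            = 0 := by
          rw [hrep]
          apply tw_cons_replicate
          intro l h1 h2
          exact hA00 l (by omega) (by omega)
        have hW2 : tw A 0 (List.replicate U.length (0 : Fin (n+2)) ++ (0 : Fin (n+2)) :: V)
            = tw A (0 + U.length) ((0 : Fin (n+2)) :: V) := by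
          rw [tw_append_cons A (0 : Fin (n+2)) V (List.replicate U.length 0) 0, hzero,
            zero_add, List.length_replicate]
        rw [← hW2]
        apply le_sSup
        refine ⟨List.replicate U.length (0 : Fin (n+2)) ++ (0 : Fin (n+2)) :: V, ?_, ?_, ?_,
          rfl⟩
        · simp only [List.length_append, List.length_cons, List.length_replicate]; omega
        · exact head?_replicate_cons U.length 0 V
        · rw [getLast?_append_cons]
          rw [getLast?_append_cons] at hl
          exact hl
      calc tw A 0 (U ++ (0 : Fin (n+2)) :: V)
          = tw A 0 (U ++ [(0 : Fin (n+2))]) + tw A (0 + U.length) ((0 : Fin (n+2)) :: V) :=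
            hsplit
        _ ≤ Gamma A k i 0 + Gamma A k 0 j := add_le_add hp1 hp2
    · -- the optimal walk avoids node 0
      by_cases hbot : tw A 0 W = ⊥
      · rw [hbot]; exact bot_le
      have hWne : W ≠ [] := by intro h; rw [h] at hlen; simp at hlen
      have htwalk : twalk A 0 W := twalk_of_tw_ne_bot W 0 hWne hbot
      have hav : ∀ x ∈ W, x ≠ (0 : Fin (n+2)) := fun x hx hgo => hmem0 (hgo ▸ hx)
      have hklen : (0:ℕ) + (W.length - 1) ≤ k := by rw [hlen]; omega
      have hle1 : tw A 0 W ≤ wWeight Asup W := htwle 0 W hklen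
      have hwalkSup : isWalk Asup W := htransfer 0 W hklen htwalk
      obtain ⟨P, r, rp, hPp, hPh, hPl, hPm, hPlen, hr, hrp, hbound⟩ :=
        walk_decomp_bound Asup hsuptop hmeanbd hwalkSup
          (fun x hx _ => hav x ((List.tail_sublist W).mem hx))
      have hPav : ∀ x ∈ P, x ≠ (0 : Fin (n+2)) := fun x hx => hav x (hPm x hx)
      have hgle : (rp : EReal) ≤ gammaE Asup 0 i j := by
        simp only [gammaE]
        exact le_sSup ⟨P, hPp, by rw [hPh, hh], by rw [hPl, hl], hPav, hrp.symm⟩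
      have hgbot : gammaE Asup 0 i j ≠ ⊥ := by
        intro hG
        rw [hG, le_bot_iff] at hgle
        exact EReal.coe_ne_bot rp hgle
      have hgtop : gammaE Asup 0 i j ≠ ⊤ := by
        apply ne_top_of_le_ne_top (EReal.coe_ne_top (((n:ℝ)+2) * c0))
        simp only [gammaE]
        apply sSup_le
        rintro x ⟨Q, hQ, -, -, -, rfl⟩
        calc wWeight Asup Q ≤ (((Q.length : ℝ) * c0 : ℝ) : EReal) :=
              wWeight_le_const hc0 hc00 Q
          _ ≤ ((((n:ℝ)+2) * c0 : ℝ) : EReal) := by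
              apply EReal.coe_le_coe_iff.mpr
              have h1 : Q.length ≤ n + 2 := by
                have := List.Nodup.length_le_card hQ.2
                simpa [Fintype.card_fin] using this
              have h2 : (Q.length : ℝ) ≤ (n:ℝ) + 2 := by exact_mod_cast h1
              nlinarith
      obtain ⟨g, hg⟩ := ereal_exists_real hgbot hgtop
      have hrg : rp ≤ g := by rw [hg] at hgle; exact_mod_cast hgle
      -- real arithmetic
      have hWlR : ((W.length : ℝ) - 1) = (k : ℝ) := by rw [hlen]; push_cast; ring
      have hPlR : ((P.length : ℝ)) ≤ (n : ℝ) + 2 := by exact_mod_cast hPlen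
      have key : r ≤ g + lam * ((k:ℝ) - ((n + 2 : ℝ) - 1)) := by
        have h1 : lam * (((W.length:ℝ) - 1) - ((P.length:ℝ) - 1))
            ≤ lam * ((k:ℝ) - ((n + 2 : ℝ) - 1)) := by
          apply mul_le_mul_of_nonpos_left ?_ (le_of_lt hlamneg)
          rw [hWlR]
          push_cast
          linarith
        linarith [hbound, hrg]
      have h3 : (w i + v j - g) / lam < (k:ℝ) - ((n + 2 : ℝ) - 1) := by
        linarith [hk1 i j g hg]
      have h4 := mul_lt_mul_of_neg_left h3 hlamneg
      have h5 : lam * ((w i + v j - g) / lam) = w i + v j - g := by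
        rw [mul_comm]; exact div_mul_cancel₀ _ hlamne
      rw [h5] at h4
      have final : r < w i + v j := by push_cast at key h4 ⊢; linarith
      calc tw A 0 W ≤ wWeight Asup W := hle1
        _ = (r : EReal) := hr
        _ ≤ ((w i + v j : ℝ) : EReal) := EReal.coe_le_coe_iff.mpr (le_of_lt final)
        _ = ((w i : ℝ) : EReal) + ((v j : ℝ) : EReal) := EReal.coe_add _ _
        _ ≤ Gamma A k i 0 + Gamma A k 0 j := add_le_add (hGw i) (hGv j)
  · -- `Gamma i 0 + Gamma 0 j ≤ Gamma i j`
    obtain ⟨W1, hlen1, hh1, hl1, hx1⟩ :=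
      (fSet_nonempty A hk i 0).csSup_mem (fSet_finite A k i 0)
    obtain ⟨W2, hlen2, hh2, hl2, hx2⟩ :=
      (fSet_nonempty A hk 0 j).csSup_mem (fSet_finite A k 0 j)
    have hG1 : Gamma A k i 0 = tw A 0 W1 := by rw [Gamma_eq_sSup A k i 0]; exact hx1
    have hG2 : Gamma A k 0 j = tw A 0 W2 := by rw [Gamma_eq_sSup A k 0 j]; exact hx2
    have hb1 : tw A 0 W1 ≠ ⊥ := by
      intro hbb
      have h := hGw i
      rw [hG1, hbb, le_bot_iff] at h
      exact EReal.coe_ne_bot _ h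
    have hb2 : tw A 0 W2 ≠ ⊥ := by
      intro hbb
      have h := hGv j
      rw [hG2, hbb, le_bot_iff] at h
      exact EReal.coe_ne_bot _ h
    have hW1ne : W1 ≠ [] := by intro h; rw [h] at hlen1; simp at hlen1
    have hW2ne : W2 ≠ [] := by intro h; rw [h] at hlen2; simp at hlen2
    have htw1 : twalk A 0 W1 := twalk_of_tw_ne_bot W1 0 hW1ne hb1
    have htw2 : twalk A 0 W2 := twalk_of_tw_ne_bot W2 0 hW2ne hb2
    -- split W1 at the first visit of 0
    obtain ⟨U1, V1, hW1eq, hU1o⟩ := exists_first_split (mem_of_getLast?_eq hl1)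
    subst hW1eq
    -- split W2 at the last visit of 0 (via reversal)
    obtain ⟨X2, Y2, hrev, hX2o⟩ :=
      exists_first_split (show (0 : Fin (n+2)) ∈ W2.reverse from
        List.mem_reverse.mpr (mem_of_head?_eq hh2))
    have hW2eq : W2 = Y2.reverse ++ (0 : Fin (n+2)) :: X2.reverse := by
      have h := congrArg List.reverse hrev
      rw [List.reverse_reverse] at h
      rw [h]
      simp [List.reverse_append]
    subst hW2eq
    set U2 := Y2.reverse with hU2def
    set V2 := X2.reverse with hV2def
    have hV2o : (0 : Fin (n+2)) ∉ V2 := fun h => hX2o (List.mem_reverse.mp h)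
    have hlenU1 : U1.length + 1 + V1.length = k + 1 := by
      simp only [List.length_append, List.length_cons] at hlen1; omega
    have hlenU2 : U2.length + 1 + V2.length = k + 1 := by
      simp only [List.length_append, List.length_cons] at hlen2; omega
    -- weight splits
    have hsp1 := tw_append_cons A (0 : Fin (n+2)) V1 U1 0
    have hsp2 := tw_append_cons A (0 : Fin (n+2)) V2 U2 0
    have htwp1 := (twalk_append_cons A (0 : Fin (n+2)) V1 U1 0).mp htw1
    have htwp2 := (twalk_append_cons A (0 : Fin (n+2)) V2 U2 0).mp htw2
    -- the tail of W1 after the first visit of 0 is a closed walk of nonpositive weight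
    have hgl1' : ((0 : Fin (n+2)) :: V1).getLast? = some 0 := by
      rw [getLast?_append_cons] at hl1; exact hl1
    have hmid1 : tw A (0 + U1.length) ((0 : Fin (n+2)) :: V1) ≤ 0 := by
      have hk' : (0 + U1.length) + (((0 : Fin (n+2)) :: V1).length - 1) ≤ k := by
        simp only [List.length_cons]; omega
      calc tw A (0 + U1.length) ((0 : Fin (n+2)) :: V1)
          ≤ wWeight Asup ((0 : Fin (n+2)) :: V1) := htwle _ _ hk'
        _ ≤ 0 := closed_walk_nonpos Asup hsup00 hsupcyc (htransfer _ _ hk' htwp1.2)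
              (by rw [hgl1']; rfl)
    have hhd2' : ((U2 ++ [(0 : Fin (n+2))])).head? = some 0 := by
      rw [head?_append_cons U2 (0 : Fin (n+2)) [] V2]
      exact hh2
    have hpre2 : tw A 0 (U2 ++ [(0 : Fin (n+2))]) ≤ 0 := by
      have hk' : 0 + ((U2 ++ [(0 : Fin (n+2))]).length - 1) ≤ k := by
        simp only [List.length_append, List.length_cons, List.length_nil]; omega
      calc tw A 0 (U2 ++ [(0 : Fin (n+2))])
          ≤ wWeight Asup (U2 ++ [(0 : Fin (n+2))]) := htwle _ _ hk'
        _ ≤ 0 := closed_walk_nonpos Asup hsup00 hsupcyc (htransfer _ _ hk' htwp2.1)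
              (by rw [hhd2', List.getLast?_concat])
    have hmaj1 : Gamma A k i 0 ≤ tw A 0 (U1 ++ [(0 : Fin (n+2))]) := by
      rw [hG1, hsp1]
      calc tw A 0 (U1 ++ [(0:Fin (n+2))]) + tw A (0 + U1.length) ((0:Fin (n+2)) :: V1)
          ≤ tw A 0 (U1 ++ [(0:Fin (n+2))]) + 0 := add_le_add le_rfl hmid1
        _ = tw A 0 (U1 ++ [(0:Fin (n+2))]) := add_zero _
    have hmaj2 : Gamma A k 0 j ≤ tw A (0 + U2.length) ((0 : Fin (n+2)) :: V2) := by
      rw [hG2, hsp2]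
      calc tw A 0 (U2 ++ [(0:Fin (n+2))]) + tw A (0 + U2.length) ((0:Fin (n+2)) :: V2)
          ≤ 0 + tw A (0 + U2.length) ((0:Fin (n+2)) :: V2) := add_le_add hpre2 le_rfl
        _ = tw A (0 + U2.length) ((0:Fin (n+2)) :: V2) := zero_add _
    have hgl2' : ((0 : Fin (n+2)) :: V2).getLast? = some j := by
      rw [getLast?_append_cons] at hl2; exact hl2
    by_cases hts : U1.length ≤ U2.length
    · -- splice the two optimal walks through node 0
      set c := U2.length - U1.length with hcdef
      have hzero : tw A (0 + U1.length) ((0:Fin (n+2)) :: List.replicate c 0) = 0 := by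
        apply tw_cons_replicate
        intro l h1 h2
        exact hA00 l (by omega) (by omega)
      have hcomm : (0:Fin (n+2)) :: (List.replicate c 0 ++ V2)
          = List.replicate c (0:Fin (n+2)) ++ ((0:Fin (n+2)) :: V2) := by
        rw [← List.cons_append, ← replicate_concat c 0, List.append_assoc,
          List.singleton_append]
      have hWnw : tw A 0 (U1 ++ (0:Fin (n+2)) :: (List.replicate c 0 ++ V2))
          = tw A 0 (U1 ++ [(0:Fin (n+2))])
            + tw A (0 + U2.length) ((0:Fin (n+2)) :: V2) := by
        rw [tw_append_cons A (0:Fin (n+2)) (List.replicate c 0 ++ V2) U1 0, hcomm,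
          tw_append_cons A (0:Fin (n+2)) V2 (List.replicate c 0) (0 + U1.length),
          replicate_concat c 0, hzero, zero_add, List.length_replicate,
          show 0 + U1.length + c = 0 + U2.length from by omega]
      rw [Gamma_eq_sSup A k i j]
      calc Gamma A k i 0 + Gamma A k 0 j
          ≤ tw A 0 (U1 ++ [(0:Fin (n+2))]) + tw A (0 + U2.length) ((0:Fin (n+2)) :: V2) :=
            add_le_add hmaj1 hmaj2
        _ = tw A 0 (U1 ++ (0:Fin (n+2)) :: (List.replicate c 0 ++ V2)) := hWnw.symm
        _ ≤ sSup (fSet A k i j) := by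
            apply le_sSup
            refine ⟨U1 ++ (0:Fin (n+2)) :: (List.replicate c 0 ++ V2), ?_, ?_, ?_, rfl⟩
            · simp only [List.length_append, List.length_cons, List.length_replicate]
              omega
            · rw [head?_append_cons U1 (0:Fin (n+2)) (List.replicate c 0 ++ V2) V1]
              exact hh1
            · rw [getLast?_append_cons, getLast?_cons_replicate_append]
              exact hgl2'
    · -- impossible: the first visit of 0 in W1 is later than the last visit of 0 in W2
      exfalso
      push_neg at hts
      -- bound the initial piece via a path to 0 and cycles avoiding 0
      have hkp1 : (0:ℕ) + ((U1 ++ [(0:Fin (n+2))]).length - 1) ≤ k := by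
        simp only [List.length_append, List.length_cons, List.length_nil]; omega
      have hw1sup : isWalk Asup (U1 ++ [(0:Fin (n+2))]) := htransfer _ _ hkp1 htwp1.1
      obtain ⟨P1, r1, rp1, hP1p, hP1h, hP1l, hP1m, hP1len, hr1, hrp1, hbd1⟩ :=
        walk_decomp_bound Asup hsuptop hmeanbd hw1sup
          (fun x _ hx2 he => hU1o (he ▸ (by rwa [List.dropLast_concat] at hx2)))
      have hle1 : tw A 0 (U1 ++ [(0:Fin (n+2))]) ≤ (r1 : EReal) := by
        rw [← hr1]; exact htwle _ _ hkp1
      have hP1head : P1.head? = some i := by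
        rw [hP1h, head?_append_cons U1 (0:Fin (n+2)) [] V1]; exact hh1
      have hP1last : P1.getLast? = some 0 := by rw [hP1l, List.getLast?_concat]
      have hrpa : (rp1 : EReal) ≤ alphaE Asup 0 i := by
        simp only [alphaE]
        exact le_sSup ⟨P1, hP1p, hP1head, hP1last, hrp1.symm⟩
      have hrpaR : rp1 ≤ a i := by rw [← ha i] at hrpa; exact_mod_cast hrpa
      have hwi : w i ≤ r1 := by
        have h := le_trans (hGw i) (le_trans hmaj1 hle1)
        exact_mod_cast h
      -- bound the final piece via a path from 0 and cycles avoiding 0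
      have hkp2 : (0 + U2.length) + (((0:Fin (n+2)) :: V2).length - 1) ≤ k := by
        simp only [List.length_cons]; omega
      have hw2sup : isWalk Asup ((0:Fin (n+2)) :: V2) := htransfer _ _ hkp2 htwp2.2
      obtain ⟨P2, r2, rp2, hP2p, hP2h, hP2l, hP2m, hP2len, hr2, hrp2, hbd2⟩ :=
        walk_decomp_bound Asup hsuptop hmeanbd hw2sup
          (fun x hx _ he => hV2o (he ▸ hx))
      have hle2 : tw A (0 + U2.length) ((0:Fin (n+2)) :: V2) ≤ (r2 : EReal) := by
        rw [← hr2]; exact htwle _ _ hkp2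
      have hP2head : P2.head? = some 0 := by rw [hP2h]; rfl
      have hP2last : P2.getLast? = some j := hP2l.trans hgl2'
      have hrpb : (rp2 : EReal) ≤ betaE Asup 0 j := by
        simp only [betaE]
        exact le_sSup ⟨P2, hP2p, hP2head, hP2last, hrp2.symm⟩
      have hrpbR : rp2 ≤ b j := by rw [← hb j] at hrpb; exact_mod_cast hrpb
      have hvj : v j ≤ r2 := by
        have h := le_trans (hGv j) (le_trans hmaj2 hle2)
        exact_mod_cast h
      -- clean up the arguments of the `lam * _` terms
      have harg1 : (((U1 ++ [(0:Fin (n+2))]).length : ℝ) - 1) - ((P1.length:ℝ) - 1)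
          = ((U1.length:ℝ)) - ((P1.length:ℝ) - 1) := by
        simp only [List.length_append, List.length_cons, List.length_nil]
        push_cast
        ring
      rw [harg1] at hbd1
      have harg2 : ((((0:Fin (n+2)) :: V2).length : ℝ) - 1) - ((P2.length:ℝ) - 1)
          = ((V2.length:ℝ)) - ((P2.length:ℝ) - 1) := by
        simp only [List.length_cons]
        push_cast
        ring
      rw [harg2] at hbd2
      have hP1lenR : (P1.length : ℝ) ≤ (n:ℝ) + 2 := by exact_mod_cast hP1len
      have hP2lenR : (P2.length : ℝ) ≤ (n:ℝ) + 2 := by exact_mod_cast hP2len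
      have m1 : lam * (((U1.length:ℝ)) - ((P1.length:ℝ) - 1))
          ≤ lam * (((U1.length:ℝ)) - (((n:ℝ) + 2) - 1)) :=
        mul_le_mul_of_nonpos_left (by linarith) (le_of_lt hlamneg)
      have m2 : lam * (((V2.length:ℝ)) - ((P2.length:ℝ) - 1))
          ≤ lam * (((V2.length:ℝ)) - (((n:ℝ) + 2) - 1)) :=
        mul_le_mul_of_nonpos_left (by linarith) (le_of_lt hlamneg)
      -- length relations
      have hlenU1R : (U1.length:ℝ) + 1 + (V1.length:ℝ) = (k:ℝ) + 1 := by
        exact_mod_cast congrArg (fun x : ℕ => (x:ℝ)) hlenU1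
      have hlenU2R : (U2.length:ℝ) + 1 + (V2.length:ℝ) = (k:ℝ) + 1 := by
        exact_mod_cast congrArg (fun x : ℕ => (x:ℝ)) hlenU2
      have htsR : (U2.length:ℝ) + 1 ≤ (U1.length:ℝ) := by exact_mod_cast hts
      -- from hk2
      have h3 : (w i - a i + v j - b j) / lam < (k:ℝ) - 2 * ((n + 2 : ℝ) - 1) := by
        linarith [hk2 i j]
      have h4 := mul_lt_mul_of_neg_left h3 hlamneg
      have h5 : lam * ((w i - a i + v j - b j) / lam) = w i - a i + v j - b j := by
        rw [mul_comm]; exact div_mul_cancel₀ _ hlamne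
      rw [h5] at h4
      -- final contradiction
      have msum : lam * (((U1.length:ℝ)) - (((n:ℝ) + 2) - 1))
            + lam * (((V2.length:ℝ)) - (((n:ℝ) + 2) - 1))
          = lam * (((U1.length:ℝ) + (V2.length:ℝ)) - 2 * (((n:ℝ) + 2) - 1)) := by ring
      have m3 : lam * (((U1.length:ℝ) + (V2.length:ℝ)) - 2 * (((n:ℝ) + 2) - 1))
          ≤ lam * (((k:ℝ) + 1) - 2 * (((n:ℝ) + 2) - 1)) :=
        mul_le_mul_of_nonpos_left (by linarith) (le_of_lt hlamneg)
      have m4 : lam * (((k:ℝ) + 1) - 2 * (((n:ℝ) + 2) - 1))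
          = lam * ((k:ℝ) - 2 * (((n:ℝ) + 2) - 1)) + lam := by ring
      have h4' : lam * ((k:ℝ) - 2 * (((n:ℝ) + 2) - 1)) < w i - a i + v j - b j := by
        have : (k:ℝ) - 2 * ((n + 2 : ℝ) - 1) = (k:ℝ) - 2 * (((n:ℝ) + 2) - 1) := by
          push_cast; ring
        rw [this] at h4
        exact h4
      linarith [hwi, hvj, hbd1, hbd2, hrpaR, hrpbR, msum, m3, m4, h4', hlamneg]


end MaxPlusTransient
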